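/- Let d ≥ 1 and let e, k ∈ E be signed unit vectors with k ≠ e. Then P_k(H_{{e}} < ∞) ≤ P_k(H_{{0}} < ∞): the probability that the simple random walk started at k ever visits e is at most the probability that it ever visits the origin. -/

import Mathlib

open scoped Classical
noncomputable section

/-- `v` is one of the `2d` signed unit vectors of `ℤ^d`. -/
def IsUnitVec {d : ℕ} (v : Fin d → ℤ) : Prop := ∑ k, |v k| = 1

/-- The steps of a simple random walk, indexed by a direction and a sign:
`step (i, true) = e_i` and `step (i, false) = -e_i`. -/
def step {d : ℕ} (e : Fin d × Bool) : Fin d → ℤ :=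
  fun k => if k = e.1 then (if e.2 then 1 else -1) else 0

/-- The position after `m` steps of the walk started at `k` following the word `ω`. -/
def walkPos {d : ℕ} (k : Fin d → ℤ) {M : ℕ} (ω : Fin M → Fin d × Bool) (m : ℕ) :
    Fin d → ℤ :=
  k + ∑ j : Fin M, if (j : ℕ) < m then step (ω j) else 0

/-- `P_k(H_Λ < ∞)`: the probability that the simple random walk on `ℤ^d` started at `k`
visits `Λ` at some time `m ≥ 1`.  Since the steps are independent and uniform on the
`2d` signed unit vectors, this equals the supremum over finite horizons `M` of the
fraction of the `(2d)^M` equiprobable step words of length `M` whose walk visits `Λ`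
by time `M`. -/
def hitProb {d : ℕ} (k : Fin d → ℤ) (Λ : Set (Fin d → ℤ)) : ℝ :=
  ⨆ M : ℕ,
    ((Finset.univ.filter fun ω : Fin M → Fin d × Bool =>
        ∃ m, 1 ≤ m ∧ m ≤ M ∧ walkPos k ω m ∈ Λ).card : ℝ) / (2 * d) ^ M


/-!
To visit `e` at a positive time the walk must first stand on a neighbour `e + s` of `e` (possibly
at time `0`). From a neighbour, the chance of stepping onto `e` is, after translating by `-e` and
applying a signed permutation of the coordinates that carries `s` to `k`, the chance that the walk
from `k` visits `0`. Conditioning on the first step, an induction on the horizon then bounds the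
hitting counts of `e` from every starting point.
-/

open Finset

section

variable {d : ℕ}

/-- `hitProb x Λ` is, by `rfl`, the supremum of `hitCount x Λ M / (2 * d) ^ M`. -/
def hitCount (x : Fin d → ℤ) (Λ : Set (Fin d → ℤ)) (M : ℕ) : ℕ :=
  (univ.filter fun ω : Fin M → Fin d × Bool => ∃ m, 1 ≤ m ∧ m ≤ M ∧ walkPos x ω m ∈ Λ).card

lemma hitCount_le (x : Fin d → ℤ) (Λ : Set (Fin d → ℤ)) (M : ℕ) :
    hitCount x Λ M ≤ (2 * d) ^ M := by
  refine (card_filter_le _ _).trans_eq ?_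
  simp [Fintype.card_prod, mul_comm]

lemma hitCount_zero (x : Fin d → ℤ) (Λ : Set (Fin d → ℤ)) : hitCount x Λ 0 = 0 := by
  simp only [hitCount, card_eq_zero, filter_eq_empty_iff]
  omega

lemma hitCount_div_le_hitProb (x : Fin d → ℤ) (Λ : Set (Fin d → ℤ)) (M : ℕ) :
    (hitCount x Λ M : ℝ) / (2 * d) ^ M ≤ hitProb x Λ := by
  refine le_ciSup (f := fun M => (hitCount x Λ M : ℝ) / (2 * d) ^ M) ⟨1, ?_⟩ M
  rintro _ ⟨M, rfl⟩
  exact div_le_one_of_le₀ (by exact_mod_cast hitCount_le x Λ M) (by positivity)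

lemma hitProb_nonneg (x : Fin d → ℤ) (Λ : Set (Fin d → ℤ)) : 0 ≤ hitProb x Λ :=
  Real.iSup_nonneg fun _ => by positivity

lemma walkPos_add (x a : Fin d → ℤ) {M : ℕ} (ω : Fin M → Fin d × Bool) (m : ℕ) :
    walkPos (x + a) ω m = walkPos x ω m + a := by
  simp only [walkPos]
  abel

lemma walkPos_cons (x : Fin d → ℤ) {M : ℕ} (v : Fin d × Bool) (τ : Fin M → Fin d × Bool)
    (m : ℕ) : walkPos x (Fin.cons v τ : Fin (M + 1) → Fin d × Bool) (m + 1) =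
      walkPos (x + step v) τ m := by
  simp [walkPos, Fin.sum_univ_succ, add_assoc]

lemma walkPos_map (g : (Fin d → ℤ) →+ (Fin d → ℤ)) (φ : Fin d × Bool → Fin d × Bool)
    (hg : ∀ v, g (step v) = step (φ v)) (x : Fin d → ℤ) {M : ℕ} (ω : Fin M → Fin d × Bool)
    (m : ℕ) : g (walkPos x ω m) = walkPos (g x) (φ ∘ ω) m := by
  simp [walkPos, map_sum, apply_ite g, hg]

lemma neg_step (v : Fin d × Bool) : -step v = step (v.1, !v.2) := by
  obtain ⟨j, b⟩ := v
  ext i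
  by_cases hi : i = j <;> cases b <;> simp [step, hi]

lemma step_comp_perm (σ : Equiv.Perm (Fin d)) (v : Fin d × Bool) :
    step v ∘ σ = step (σ.symm v.1, v.2) := by
  ext i
  simp only [Function.comp_apply, step, ← Equiv.eq_symm_apply]

lemma hitCount_eq_hitCount_sub (x y : Fin d → ℤ) (M : ℕ) :
    hitCount x {y} M = hitCount (x - y) {0} M := by
  simp [hitCount, sub_eq_add_neg, walkPos_add, add_neg_eq_zero]

lemma hitCount_map (g : (Fin d → ℤ) →+ (Fin d → ℤ)) (φ : Fin d × Bool ≃ Fin d × Bool)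
    (hg : ∀ v, g (step v) = step (φ v)) (x : Fin d → ℤ) (Λ : Set (Fin d → ℤ)) (M : ℕ) :
    hitCount (g x) Λ M = hitCount x (g ⁻¹' Λ) M := by
  refine (card_equiv ((Equiv.refl _).arrowCongr φ) fun ω => ?_).symm
  simp only [mem_filter, mem_univ, true_and, Set.mem_preimage, walkPos_map g φ hg]
  rfl

lemma hitCount_map_zero (g : (Fin d → ℤ) →+ (Fin d → ℤ)) (hg_inj : Function.Injective g)
    (φ : Fin d × Bool ≃ Fin d × Bool) (hg : ∀ v, g (step v) = step (φ v)) (x : Fin d → ℤ)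
    (M : ℕ) : hitCount (g x) {0} M = hitCount x {0} M := by
  have h0 : g ⁻¹' {0} = {0} := by
    ext y
    simp [map_eq_zero_iff g hg_inj]
  rw [hitCount_map g φ hg, h0]

/-- Negation and the coordinate permutations act transitively on the steps. -/
lemma hitCount_step_zero_eq (v w : Fin d × Bool) (M : ℕ) :
    hitCount (step v) {0} M = hitCount (step w) {0} M := by
  have hneg : ∀ v : Fin d × Bool,
      hitCount (step (v.1, !v.2)) {0} M = hitCount (step v) {0} M := fun v => by
    rw [← neg_step]
    exact hitCount_map_zero negAddMonoidHom neg_injective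
      (Function.Involutive.toPerm _ fun _ => by simp) neg_step (step v) M
  have hperm : ∀ (σ : Equiv.Perm (Fin d)) (v : Fin d × Bool),
      hitCount (step (σ.symm v.1, v.2)) {0} M = hitCount (step v) {0} M := fun σ v => by
    rw [← step_comp_perm]
    exact hitCount_map_zero (LinearMap.funLeft ℤ ℤ σ).toAddMonoidHom
      (LinearMap.funLeft_injective_of_surjective ℤ ℤ _ σ.surjective)
      (σ.symm.prodCongr (Equiv.refl Bool)) (step_comp_perm σ) (step v) M
  obtain ⟨i, b⟩ := v
  obtain ⟨j, c⟩ := w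
  rw [← hperm (Equiv.swap i j)]
  cases b <;> cases c <;> simp [← hneg (j, true)]

lemma hitCount_succ {x : Fin d → ℤ} {Λ : Set (Fin d → ℤ)} (hx : ∀ v, x + step v ∉ Λ) (M : ℕ) :
    hitCount x Λ (M + 1) = ∑ v, hitCount (x + step v) Λ M := by
  have hit_cons : ∀ v (τ : Fin M → Fin d × Bool),
      (∃ m, 1 ≤ m ∧ m ≤ M + 1 ∧ walkPos x (Fin.cons v τ : Fin (M + 1) → _) m ∈ Λ) ↔
      ∃ m, 1 ≤ m ∧ m ≤ M ∧ walkPos (x + step v) τ m ∈ Λ := by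
    intro v τ
    constructor
    · rintro ⟨_ | _ | m, hm1, hmM, hm⟩
      · omega
      · exact absurd (by simpa [walkPos] using hm) (hx v)
      · exact ⟨m + 1, by omega, by omega, by rwa [walkPos_cons] at hm⟩
    · rintro ⟨m, hm1, hmM, hm⟩
      exact ⟨m + 1, by omega, by omega, by rwa [walkPos_cons]⟩
  simp only [hitCount, card_filter]
  rw [← (Fin.consEquiv fun _ => Fin d × Bool).sum_comp, Fintype.sum_prod_type]
  simp [Fin.consEquiv, hit_cons]

lemma exists_step_eq_of_isUnitVec {v : Fin d → ℤ} (hv : IsUnitVec v) : ∃ w, step w = v := by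
  obtain ⟨i, hi⟩ : ∃ i, v i ≠ 0 := by
    by_contra! h
    simp [IsUnitVec, h] at hv
  have hsplit : |v i| + ∑ j ∈ univ.erase i, |v j| = 1 := by
    rw [add_sum_erase univ (fun j => |v j|) (mem_univ i)]
    exact hv
  have hrest_nonneg : 0 ≤ ∑ j ∈ univ.erase i, |v j| := sum_nonneg fun j _ => abs_nonneg (v j)
  have hvi : |v i| = 1 := by
    have := Int.one_le_abs hi
    omega
  have hrest : ∑ j ∈ univ.erase i, |v j| = 0 := by omega
  have hzero : ∀ j ≠ i, v j = 0 := fun j hj =>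
    abs_eq_zero.mp ((sum_eq_zero_iff_of_nonneg fun _ _ => abs_nonneg _).mp hrest j
      (mem_erase.mpr ⟨hj, mem_univ j⟩))
  refine ⟨(i, 0 < v i), funext fun j => ?_⟩
  by_cases hj : j = i
  · subst hj
    rcases abs_eq_abs.mp (hvi.trans abs_one.symm) with h | h <;> simp [step, h]
  · simp [step, hj, hzero j hj]

lemma hitCount_le_of_add_step_eq (w : Fin d × Bool) {e x : Fin d → ℤ} {v : Fin d × Bool}
    (hv : x + step v = e) (M : ℕ) :
    (hitCount x {e} M : ℝ) ≤ hitProb (step w) {0} * (2 * d) ^ M := by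
  rw [hitCount_eq_hitCount_sub, ← hv, sub_add_cancel_left, neg_step, hitCount_step_zero_eq _ w]
  have : 0 < d := w.1.pos
  exact (div_le_iff₀ (by positivity)).mp (hitCount_div_le_hitProb _ _ M)

lemma hitCount_singleton_le (w : Fin d × Bool) (e x : Fin d → ℤ) (M : ℕ) :
    (hitCount x {e} M : ℝ) ≤ hitProb (step w) {0} * (2 * d) ^ M := by
  induction M generalizing x with
  | zero => simp [hitCount_zero, hitProb_nonneg]
  | succ M ih =>
    by_cases hx : ∃ v, x + step v = e
    · obtain ⟨v, hv⟩ := hx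
      exact hitCount_le_of_add_step_eq w hv _
    push Not at hx
    rw [hitCount_succ hx M]
    push_cast
    calc ∑ v, (hitCount (x + step v) {e} M : ℝ)
        ≤ ∑ _v : Fin d × Bool, hitProb (step w) {0} * (2 * d) ^ M := sum_le_sum fun v _ => ih _
      _ = hitProb (step w) {0} * (2 * d) ^ (M + 1) := by
        simp only [sum_const, card_univ, Fintype.card_prod, Fintype.card_fin, Fintype.card_bool,
          nsmul_eq_mul]
        push_cast
        ring

end

theorem hitProb_neighbor_le_hitProb_origin_general
    {d : ℕ} (e k : Fin d → ℤ)
    (hk : IsUnitVec k) :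
    hitProb k ({e} : Set (Fin d → ℤ)) ≤ hitProb k ({0} : Set (Fin d → ℤ)) := by
  obtain ⟨w, rfl⟩ := exists_step_eq_of_isUnitVec hk
  refine ciSup_le fun M => div_le_of_le_mul₀ (by positivity) (hitProb_nonneg _ _) ?_
  exact hitCount_singleton_le w e (step w) M

/-- **Appendix, step (i).**  For signed unit vectors `k ≠ e`, the probability that the
simple random walk started at `k` ever visits `e` is at most the probability that it
ever visits the origin. -/
theorem hitProb_neighbor_le_hitProb_origin
    {d : ℕ} (hd : 1 ≤ d) (e k : Fin d → ℤ)
    (he : IsUnitVec e) (hk : IsUnitVec k) (hne : k ≠ e) :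
    hitProb k ({e} : Set (Fin d → ℤ)) ≤ hitProb k ({0} : Set (Fin d → ℤ)) :=
  hitProb_neighbor_le_hitProb_origin_general e k hk
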